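/- Irrotational Killing fields on the Carter-Pleba\'nski boundary: for the metric $\hat{g} = -d\tau^2 + \frac{\ell^2}{\mathsf{P}(p)}dp^2 + (\ell^2\mathsf{P}(p) - p^4)d\sigma^2 + 2p^2 d\tau\, d\sigma$ with $\mathsf{P}(p) = p^4/\ell^2 - \epsilon p^2 + \Gamma$, a Killing field $\xi = A\partial_\tau + B\partial_\sigma$ (with $B \neq 0$) is hypersurface-orthogonal (its orthogonal distribution is involutive) if and only if $A^2 - \epsilon\ell^2 AB + B^2\ell^2\Gamma = 0$, which has real solutions $A = \alpha_\pm B$ with $\alpha_\pm = \ell^2(\epsilon \pm \sqrt{\Delta})/2$ precisely when $\Delta = \epsilon^2 - 4\Gamma/\ell^2 \geq 0$. Moreover, for $\xi_\pm = \alpha_\pm \partial_\tau + \partial_\sigma$, one has $\hat{g}(\xi_\pm, \xi_\pm) = \pm\ell^2\sqrt{\Delta}(p^2 - \alpha_\pm)$ and $\hat{g}(\xi_+, \xi_-) = 0$. -/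

import Mathlib

noncomputable section

open Real Matrix

/-- Boundary metric of the Carter–Plebański solution in coordinates (τ,p,σ):
ĝ = -dτ² + (ℓ²/P(p))dp² + (ℓ²P(p)-p⁴)dσ² + 2p² dτ dσ, with
P(p) = p⁴/ℓ² - εp² + Γ. -/
def cpBoundaryMetric (ℓ ε Γ : ℝ) (p : ℝ) : Matrix (Fin 3) (Fin 3) ℝ :=
  !![-1, 0, p ^ 2;
     0, ℓ ^ 2 / (p ^ 4 / ℓ ^ 2 - ε * p ^ 2 + Γ), 0;
     p ^ 2, 0, ℓ ^ 2 * (p ^ 4 / ℓ ^ 2 - ε * p ^ 2 + Γ) - p ^ 4]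

/-- Lowered components ξ_μ = ĝ_{μν}ξ^ν of the Killing field ξ = A∂_τ + B∂_σ
(component order (τ,p,σ)). -/
def xiLow (ℓ ε Γ A B : ℝ) (p : ℝ) (μ : Fin 3) : ℝ :=
  ∑ ν, cpBoundaryMetric ℓ ε Γ p μ ν * ![A, 0, B] ν

/-- Frobenius twist scalar ε^{μνρ}ξ_μ∂_νξ_ρ of ξ (which depends only on p). -/
def xiTwist (ℓ ε Γ A B : ℝ) (p : ℝ) : ℝ :=
  xiLow ℓ ε Γ A B p 0 * deriv (fun q => xiLow ℓ ε Γ A B q 2) p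
    - xiLow ℓ ε Γ A B p 2 * deriv (fun q => xiLow ℓ ε Γ A B q 0) p

/-!
The twist of `ξ = A∂_τ + B∂_σ` is `-2p·Q(A, B)` with `Q(A, B) = A² - εℓ²AB + ℓ²ΓB²`, so `ξ` is
hypersurface-orthogonal exactly when the binary quadratic form `Q` vanishes at `(A, B)`. Its
discriminant is `(εℓ²)² - 4ℓ²Γ = ℓ⁴Δ`, whence real roots `α± = ℓ²(ε ± √Δ)/2` iff `Δ ≥ 0`. The norms
of `ξ±` then follow from Vieta's formulas `α₊ + α₋ = εℓ²`, `α₊α₋ = ℓ²Γ`.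
-/

section BinaryQuadraticForm

variable {K : Type*} [Field K] [CharZero K]

theorem sq_sub_mul_mul_add_mul_sq_eq_zero_iff {c d s : K} (hs : s ^ 2 = c ^ 2 - 4 * d) (A B : K) :
    A ^ 2 - c * A * B + d * B ^ 2 = 0 ↔ A = (c + s) / 2 * B ∨ A = (c - s) / 2 * B := by
  have hfactor : A ^ 2 - c * A * B + d * B ^ 2 = (A - (c + s) / 2 * B) * (A - (c - s) / 2 * B) := by
    linear_combination (B ^ 2 / 4) * hs
  rw [hfactor, mul_eq_zero, sub_eq_zero, sub_eq_zero]

end BinaryQuadraticForm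

theorem exists_sq_sub_mul_mul_add_mul_sq_eq_zero_iff {c d B : ℝ} (hB : B ≠ 0) :
    (∃ A, A ^ 2 - c * A * B + d * B ^ 2 = 0) ↔ 0 ≤ c ^ 2 - 4 * d := by
  constructor
  · rintro ⟨A, hA⟩
    have hsq : (2 * A - c * B) ^ 2 = (c ^ 2 - 4 * d) * B ^ 2 := by linear_combination 4 * hA
    exact nonneg_of_mul_nonneg_left (hsq ▸ sq_nonneg _) (by positivity)
  · intro hdisc
    have hs : √(c ^ 2 - 4 * d) ^ 2 = c ^ 2 - 4 * d := Real.sq_sqrt hdisc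
    exact ⟨_, (sq_sub_mul_mul_add_mul_sq_eq_zero_iff hs _ B).2 (Or.inl rfl)⟩

section CarterPlebanski

variable {ℓ : ℝ} (ε Γ : ℝ)

theorem cpBoundaryMetric_eq (hℓ : ℓ ≠ 0) (p : ℝ) :
    cpBoundaryMetric ℓ ε Γ p =
      !![-1, 0, p ^ 2;
         0, ℓ ^ 2 / (p ^ 4 / ℓ ^ 2 - ε * p ^ 2 + Γ), 0;
         p ^ 2, 0, ℓ ^ 2 * Γ - ε * ℓ ^ 2 * p ^ 2] := by
  have hσσ : ℓ ^ 2 * (p ^ 4 / ℓ ^ 2 - ε * p ^ 2 + Γ) - p ^ 4 = ℓ ^ 2 * Γ - ε * ℓ ^ 2 * p ^ 2 := by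
    field_simp
    ring
  rw [cpBoundaryMetric, hσσ]

theorem xiLow_zero (A B q : ℝ) : xiLow ℓ ε Γ A B q 0 = -A + q ^ 2 * B := by
  simp [xiLow, cpBoundaryMetric, Fin.sum_univ_three]

theorem xiLow_two (hℓ : ℓ ≠ 0) (A B q : ℝ) :
    xiLow ℓ ε Γ A B q 2 = q ^ 2 * A + (ℓ ^ 2 * Γ - ε * ℓ ^ 2 * q ^ 2) * B := by
  simp [xiLow, cpBoundaryMetric_eq ε Γ hℓ, Fin.sum_univ_three]

theorem hasDerivAt_xiLow_zero (A B p : ℝ) :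
    HasDerivAt (fun q => xiLow ℓ ε Γ A B q 0) (2 * p * B) p := by
  simp_rw [xiLow_zero]
  exact (((hasDerivAt_pow 2 p).mul_const B).const_add (-A)).congr_deriv (by norm_num)

theorem hasDerivAt_xiLow_two (hℓ : ℓ ≠ 0) (A B p : ℝ) :
    HasDerivAt (fun q => xiLow ℓ ε Γ A B q 2) (2 * p * A - 2 * ε * ℓ ^ 2 * p * B) p := by
  simp_rw [xiLow_two ε Γ hℓ]
  exact (((hasDerivAt_pow 2 p).mul_const A).add
    ((((hasDerivAt_pow 2 p).const_mul (ε * ℓ ^ 2)).const_sub (ℓ ^ 2 * Γ)).mul_const B)).congr_deriv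
      (by norm_num; ring)

theorem xiTwist_eq (hℓ : ℓ ≠ 0) (A B p : ℝ) :
    xiTwist ℓ ε Γ A B p = -2 * p * (A ^ 2 - ε * ℓ ^ 2 * A * B + B ^ 2 * ℓ ^ 2 * Γ) := by
  rw [xiTwist, (hasDerivAt_xiLow_zero ε Γ A B p).deriv, (hasDerivAt_xiLow_two ε Γ hℓ A B p).deriv,
    xiLow_zero, xiLow_two ε Γ hℓ]
  ring

theorem cpBoundaryMetric_inner (hℓ : ℓ ≠ 0) (a b p : ℝ) :
    ∑ μ, ∑ ν, cpBoundaryMetric ℓ ε Γ p μ ν * ![a, 0, 1] μ * ![b, 0, 1] ν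
      = -(a * b) + (a + b) * p ^ 2 + ℓ ^ 2 * Γ - ε * ℓ ^ 2 * p ^ 2 := by
  simp only [cpBoundaryMetric_eq ε Γ hℓ, Fin.sum_univ_three, of_apply, cons_val', cons_val_fin_one,
    cons_val_zero, cons_val_one, cons_val]
  ring

theorem sq_mul_sqrt_discriminant (hℓ : ℓ ≠ 0) (hΔ : 0 ≤ ε ^ 2 - 4 * Γ / ℓ ^ 2) :
    (ℓ ^ 2 * √(ε ^ 2 - 4 * Γ / ℓ ^ 2)) ^ 2 = (ε * ℓ ^ 2) ^ 2 - 4 * (ℓ ^ 2 * Γ) := by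
  rw [mul_pow, Real.sq_sqrt hΔ]
  field_simp

end CarterPlebanski

/-- **Irrotational Killing fields on the Carter–Plebański boundary.**
ξ = A∂_τ + B∂_σ (B ≠ 0) is hypersurface-orthogonal iff
A² - εℓ²AB + B²ℓ²Γ = 0, which has real solutions A = α±B with
α± = ℓ²(ε±√Δ)/2 precisely when Δ = ε² - 4Γ/ℓ² ≥ 0; moreover
ĝ(ξ±,ξ±) = ±ℓ²√Δ(p²-α±) and ĝ(ξ₊,ξ₋) = 0 for ξ± = α±∂_τ + ∂_σ. -/
theorem cp_boundary_irrotational_killing (ℓ ε Γ : ℝ) (hℓ : 0 < ℓ) :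
    (∀ A B : ℝ, B ≠ 0 →
      ((∀ p : ℝ, xiTwist ℓ ε Γ A B p = 0) ↔
        A ^ 2 - ε * ℓ ^ 2 * A * B + B ^ 2 * ℓ ^ 2 * Γ = 0)) ∧
    (∀ B : ℝ, B ≠ 0 →
      ((∃ A : ℝ, A ^ 2 - ε * ℓ ^ 2 * A * B + B ^ 2 * ℓ ^ 2 * Γ = 0) ↔
        ε ^ 2 - 4 * Γ / ℓ ^ 2 ≥ 0)) ∧
    (ε ^ 2 - 4 * Γ / ℓ ^ 2 ≥ 0 →
      (∀ A B : ℝ,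
        (A ^ 2 - ε * ℓ ^ 2 * A * B + B ^ 2 * ℓ ^ 2 * Γ = 0 ↔
          A = ℓ ^ 2 * (ε + Real.sqrt (ε ^ 2 - 4 * Γ / ℓ ^ 2)) / 2 * B ∨
          A = ℓ ^ 2 * (ε - Real.sqrt (ε ^ 2 - 4 * Γ / ℓ ^ 2)) / 2 * B)) ∧
      (∀ p : ℝ,
        (∑ μ, ∑ ν, cpBoundaryMetric ℓ ε Γ p μ ν *
            ![ℓ ^ 2 * (ε + Real.sqrt (ε ^ 2 - 4 * Γ / ℓ ^ 2)) / 2, 0, 1] μ *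
            ![ℓ ^ 2 * (ε + Real.sqrt (ε ^ 2 - 4 * Γ / ℓ ^ 2)) / 2, 0, 1] ν)
          = ℓ ^ 2 * Real.sqrt (ε ^ 2 - 4 * Γ / ℓ ^ 2) *
              (p ^ 2 - ℓ ^ 2 * (ε + Real.sqrt (ε ^ 2 - 4 * Γ / ℓ ^ 2)) / 2)) ∧
      (∀ p : ℝ,
        (∑ μ, ∑ ν, cpBoundaryMetric ℓ ε Γ p μ ν *
            ![ℓ ^ 2 * (ε - Real.sqrt (ε ^ 2 - 4 * Γ / ℓ ^ 2)) / 2, 0, 1] μ *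
            ![ℓ ^ 2 * (ε - Real.sqrt (ε ^ 2 - 4 * Γ / ℓ ^ 2)) / 2, 0, 1] ν)
          = -(ℓ ^ 2 * Real.sqrt (ε ^ 2 - 4 * Γ / ℓ ^ 2) *
              (p ^ 2 - ℓ ^ 2 * (ε - Real.sqrt (ε ^ 2 - 4 * Γ / ℓ ^ 2)) / 2))) ∧
      (∀ p : ℝ,
        (∑ μ, ∑ ν, cpBoundaryMetric ℓ ε Γ p μ ν *
            ![ℓ ^ 2 * (ε + Real.sqrt (ε ^ 2 - 4 * Γ / ℓ ^ 2)) / 2, 0, 1] μ *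
            ![ℓ ^ 2 * (ε - Real.sqrt (ε ^ 2 - 4 * Γ / ℓ ^ 2)) / 2, 0, 1] ν) = 0)) := by
  have hℓ0 : ℓ ≠ 0 := hℓ.ne'
  have hQ : ∀ A B, A ^ 2 - ε * ℓ ^ 2 * A * B + B ^ 2 * ℓ ^ 2 * Γ
      = A ^ 2 - (ε * ℓ ^ 2) * A * B + (ℓ ^ 2 * Γ) * B ^ 2 := fun _ _ => by ring
  refine ⟨fun A B _ => ?_, fun B hB => ?_, fun hΔ => ?_⟩
  · simp_rw [xiTwist_eq ε Γ hℓ0]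
    exact ⟨fun h => by simpa using h 1, fun h p => by rw [h, mul_zero]⟩
  · have hdisc : (ε * ℓ ^ 2) ^ 2 - 4 * (ℓ ^ 2 * Γ) = (ℓ ^ 2) ^ 2 * (ε ^ 2 - 4 * Γ / ℓ ^ 2) := by
      field_simp
    simp_rw [hQ, exists_sq_sub_mul_mul_add_mul_sq_eq_zero_iff hB, hdisc]
    exact ⟨fun h => nonneg_of_mul_nonneg_right h (by positivity), fun h => by positivity⟩
  have hs := sq_mul_sqrt_discriminant ε Γ hℓ0 hΔ
  refine ⟨fun A B => ?_, fun p => ?_, fun p => ?_, fun p => ?_⟩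
  · rw [hQ, sq_sub_mul_mul_add_mul_sq_eq_zero_iff hs]
    ring_nf
  all_goals
    rw [cpBoundaryMetric_inner ε Γ hℓ0]
    linear_combination hs / 4

end
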